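/- arXiv:2108.11058 — 2 statements merged into one kernel-verified Lean document; each statement's English description precedes it below -/
import Mathlib

section
/- Let A and B be periodic admissible sequences of minimal period n. If μ(A) = μ(B), then either A = B, or n is even and S^{n/2}(A) = B. -/
/-- Admissible sequences are functions `ℕ → Bool`, with `false = L`, `true = R`.
`shiftSeq k A` is the `k`-fold shift `S^k A`. -/
def shiftSeq (k : ℕ) (A : ℕ → Bool) : ℕ → Bool := fun i => A (i + k)

/-- The block `A_0 ⋯ A_{n-1}` is even: it contains an even number of `R`'s. -/
def BlockEven (A : ℕ → Bool) (n : ℕ) : Prop :=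
  Even ((Finset.range n).filter fun i => A i = true).card

/-- The order on admissible sequences: `A < B` iff at the first index `n` of
disagreement, either `A_0 ⋯ A_{n-1}` is even and `A n = L < R = B n`, or it is
odd and `A n = R > L = B n`. -/
def SeqLT (A B : ℕ → Bool) : Prop :=
  ∃ n : ℕ, (∀ i < n, A i = B i) ∧ A n ≠ B n ∧
    ((BlockEven A n ∧ A n = false ∧ B n = true) ∨
     (¬ BlockEven A n ∧ A n = true ∧ B n = false))

def SeqLE (A B : ℕ → Bool) : Prop := SeqLT A B ∨ A = B

/-- `A` is maximal: `S^k A ≤ A` for all `k ≥ 0`. -/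
def SeqMaximal (A : ℕ → Bool) : Prop := ∀ k : ℕ, SeqLE (shiftSeq k A) A

/-- `A` is periodic of period `n > 0`. -/
def IsPeriodicSeq (A : ℕ → Bool) (n : ℕ) : Prop := 0 < n ∧ ∀ i, A (i + n) = A i

/-- The minimal period of `A` (and `0` if `A` is not periodic). -/
noncomputable def minPer (A : ℕ → Bool) : ℕ := sInf {n : ℕ | IsPeriodicSeq A n}

/-- Flip (`L ↔ R`) the symbol of `A` at every position congruent to `n - 1`
modulo `n`. -/
def flipAt (n : ℕ) (A : ℕ → Bool) : ℕ → Bool :=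
  fun i => if i % n = n - 1 then !(A i) else A i

/-- The map `μ` on periodic admissible sequences: if `n` is the minimal period of
`A` and `m` (with `0 ≤ m ≤ n-1`) is the unique integer such that `S^m A` is
maximal, then `μ A = S^{n-m} B`, where `B` is obtained from `S^m A` by flipping
the symbol at every position congruent to `n - 1` modulo `n`. -/
noncomputable def muSeq (A : ℕ → Bool) : ℕ → Bool :=
  shiftSeq (minPer A - sInf {m : ℕ | SeqMaximal (shiftSeq m A)})
    (flipAt (minPer A)
      (shiftSeq (sInf {m : ℕ | SeqMaximal (shiftSeq m A)}) A))

/-- The map `ν`: `ν A = μ A` if `per (μ A) = per A`, and `ν A = S^{per A / 2} A`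
otherwise. -/
noncomputable def nuSeq (A : ℕ → Bool) : ℕ → Bool :=
  if minPer (muSeq A) = minPer A then muSeq A else shiftSeq (minPer A / 2) A

/-!
Reading a sequence through the parities of its prefixes turns the order on admissible sequences
into the lexicographic order on `ℕ → Bool`; in particular it is linear, and a periodic sequence has
a maximal shift. Write `A = S^{n-a} M` with `M` maximal and put `C = flipAt n M`, so that `μ A` is a
shift of `C`. The key fact is that `C` is maximal again: for `0 < k < n`, either the comparison of
`S^k C` with `C` is decided where that of `S^k M` with `M` is, or `S^k C` and `C` share an odd block
of length `n - k`, which reduces the comparison to that of `S^{n-k} C` with `C`.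

If `μ A = μ B`, then `C_A = S^a μ` and `C_B = S^b μ` are maximal shifts of the same periodic
sequence `μ`, so they coincide, and so do `M_A = M_B`. For `a ≠ b` the sequence `C` then has a
period `d` with `0 < d < n`; comparing `M` with its shift by `n - 2d` shows that this forces
`n = 2d`.
-/

open Function

theorem shiftSeq_zero (X : ℕ → Bool) : shiftSeq 0 X = X := rfl

theorem shiftSeq_shiftSeq (a b : ℕ) (X : ℕ → Bool) :
    shiftSeq a (shiftSeq b X) = shiftSeq (a + b) X :=
  funext fun i => congrArg X (Nat.add_assoc i a b)

theorem periodic_iff_shiftSeq_eq {X : ℕ → Bool} {n : ℕ} : Periodic X n ↔ shiftSeq n X = X :=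
  funext_iff.symm

theorem periodic_shiftSeq_sub {X : ℕ → Bool} {a b : ℕ} (h : shiftSeq a X = shiftSeq b X)
    (hab : a ≤ b) : Periodic (shiftSeq a X) (b - a) :=
  periodic_iff_shiftSeq_eq.2 (by rw [shiftSeq_shiftSeq, Nat.sub_add_cancel hab, h])

namespace Function.Periodic

variable {X : ℕ → Bool} {n : ℕ}

theorem shiftSeq_eq (h : Periodic X n) : shiftSeq n X = X := periodic_iff_shiftSeq_eq.1 h

theorem shiftSeq_add_self (h : Periodic X n) (k : ℕ) : shiftSeq (k + n) X = shiftSeq k X := by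
  rw [← shiftSeq_shiftSeq, h.shiftSeq_eq]

theorem shiftSeq_mod (h : Periodic X n) (k : ℕ) : shiftSeq (k % n) X = shiftSeq k X := by
  have hmul : Periodic X (k / n * n) := by simpa using h.nat_mul (k / n)
  conv_rhs => rw [← Nat.mod_add_div k n, Nat.mul_comm, ← shiftSeq_shiftSeq, hmul.shiftSeq_eq]

theorem exists_shiftSeq_eq (h : Periodic X n) (hn : 0 < n) (a b : ℕ) :
    ∃ c, shiftSeq c (shiftSeq b X) = shiftSeq a X :=
  ⟨a + b * n - b, by
    have hmul : Periodic X (b * n) := by simpa using h.nat_mul b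
    rw [shiftSeq_shiftSeq, Nat.sub_add_cancel (by nlinarith), ← shiftSeq_shiftSeq,
      hmul.shiftSeq_eq]⟩

theorem nat_sub (h : Periodic X n) {d : ℕ} (hd : Periodic X d) (hdn : d ≤ n) :
    Periodic X (n - d) :=
  fun i => by rw [← hd, Nat.add_assoc, Nat.sub_add_cancel hdn, h]

theorem of_forall_lt (h : Periodic X n) (hn : 0 < n) {k : ℕ} (hk : ∀ i < n, X (i + k) = X i) :
    Periodic X k := fun i => by
  rw [← h.map_mod_nat (i + k), ← Nat.mod_add_mod, h.map_mod_nat, hk _ (Nat.mod_lt i hn),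
    h.map_mod_nat]

theorem of_forall_lt_sub {k : ℕ} (h : Periodic X n) (hkn : k < n)
    (h₁ : ∀ i < n - k, X (i + k) = X i) (h₂ : ∀ i < k, X (i + (n - k)) = X i) :
    Periodic X k := by
  refine h.of_forall_lt (by omega) fun i hi => ?_
  by_cases hik : i < n - k
  · exact h₁ i hik
  · have h' := h₂ (i - (n - k)) (by omega)
    rw [Nat.sub_add_cancel (by omega)] at h'
    rw [h', show i + k = i - (n - k) + n by omega, h]

theorem shiftSeq (h : Periodic X n) (k : ℕ) : Periodic (shiftSeq k X) n := fun i => by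
  simp only [_root_.shiftSeq, Nat.add_right_comm i n k, h (i + k)]

end Function.Periodic

def prefixParity (X : ℕ → Bool) : ℕ → Bool
  | 0 => false
  | t + 1 => xor (prefixParity X t) (X t)

section Order

variable {X Y : ℕ → Bool}

theorem prefixParity_succ (X : ℕ → Bool) (t : ℕ) :
    prefixParity X (t + 1) = xor (prefixParity X t) (X t) := rfl

theorem prefixParity_congr {t : ℕ} (h : ∀ i < t, X i = Y i) :
    prefixParity X t = prefixParity Y t := by
  induction t with
  | zero => rfl
  | succ t ih =>
    rw [prefixParity_succ, prefixParity_succ, ih fun i hi => h i (by omega), h t (by omega)]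

theorem prefixParity_add (X : ℕ → Bool) (a b : ℕ) :
    prefixParity X (a + b) = xor (prefixParity X a) (prefixParity (shiftSeq a X) b) := by
  induction b with
  | zero => simp [prefixParity]
  | succ b ih =>
    rw [← Nat.add_assoc, prefixParity_succ, ih, prefixParity_succ, Bool.xor_assoc, shiftSeq,
      Nat.add_comm b a]

theorem blockEven_iff (X : ℕ → Bool) (t : ℕ) :
    BlockEven X t ↔ prefixParity X t = false := by
  induction t with
  | zero => simp [BlockEven, prefixParity]
  | succ t ih =>
    rw [BlockEven, Finset.range_add_one, Finset.filter_insert, prefixParity_succ]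
    by_cases hX : X t = true
    · rw [if_pos hX, Finset.card_insert_of_notMem (by simp), Nat.even_add_one, ← BlockEven, ih,
        hX]
      simp
    · rw [if_neg hX, ← BlockEven, ih, Bool.eq_false_iff.2 hX, Bool.xor_false]

theorem seqLT_iff_of_firstDiff {q : ℕ} (h : ∀ i < q, X i = Y i) (hq : X q ≠ Y q) :
    SeqLT X Y ↔ X q = prefixParity X q := by
  constructor
  · rintro ⟨m, hm, hne, hc⟩
    obtain rfl : m = q := by
      rcases Nat.lt_trichotomy m q with hmq | hmq | hmq
      · exact absurd (h m hmq) hne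
      · exact hmq
      · exact absurd (hm q hmq) hq
    rw [blockEven_iff] at hc
    rcases hc with ⟨hp, hx, -⟩ | ⟨hp, hx, -⟩ <;> simp_all
  · intro hx
    refine ⟨q, h, hq, ?_⟩
    rw [blockEven_iff]
    revert hq hx
    cases X q <;> cases Y q <;> cases prefixParity X q <;> simp

theorem exists_firstDiff {i : ℕ} (hi : X i ≠ Y i) :
    ∃ q ≤ i, (∀ j < q, X j = Y j) ∧ X q ≠ Y q := by
  classical
  have hex : ∃ q, X q ≠ Y q := ⟨i, hi⟩
  exact ⟨Nat.find hex, Nat.find_min' hex hi, fun j hj => not_not.1 (Nat.find_min hex hj),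
    Nat.find_spec hex⟩

def parityCode (X : ℕ → Bool) : Lex (ℕ → Bool) := toLex fun i => prefixParity X (i + 1)

theorem forall_lt_eq_iff_parityCode {q : ℕ} :
    (∀ i < q, X i = Y i) ↔ ∀ i < q, parityCode X i = parityCode Y i := by
  refine ⟨fun h i hi => prefixParity_congr fun j hj => h j (by omega), fun h i hi => ?_⟩
  have hprev : prefixParity X i = prefixParity Y i := by
    cases i with
    | zero => rfl
    | succ i => exact h i (by omega)
  simpa [parityCode, prefixParity_succ, hprev] using h i hi

theorem seqLT_iff_parityCode_lt : SeqLT X Y ↔ parityCode X < parityCode Y := by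
  refine exists_congr fun q => ?_
  rw [← forall_lt_eq_iff_parityCode]
  refine and_congr_right fun h => ?_
  simp only [parityCode, Pi.toLex_apply, prefixParity_succ, prefixParity_congr h, blockEven_iff]
  cases X q <;> cases Y q <;> cases prefixParity Y q <;> simp

theorem parityCode_injective : Injective parityCode := fun _ _ h =>
  funext fun i => forall_lt_eq_iff_parityCode.2 (fun j _ => congrFun h j) i (Nat.lt_succ_self i)

theorem seqLE_iff_parityCode_le : SeqLE X Y ↔ parityCode X ≤ parityCode Y := by
  rw [SeqLE, seqLT_iff_parityCode_lt, le_iff_lt_or_eq, parityCode_injective.eq_iff]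
  exact Iff.rfl

theorem seqLE_iff_not_seqLT : SeqLE X Y ↔ ¬ SeqLT Y X := by
  rw [seqLE_iff_parityCode_le, seqLT_iff_parityCode_lt]
  exact not_lt.symm

theorem not_seqLT_self (X : ℕ → Bool) : ¬ SeqLT X X := fun ⟨_, _, hne, _⟩ => hne rfl

theorem seqLT_iff_shiftSeq {p : ℕ} (h : ∀ i < p, X i = Y i) :
    SeqLT X Y ↔ if prefixParity X p then SeqLT (shiftSeq p Y) (shiftSeq p X)
      else SeqLT (shiftSeq p X) (shiftSeq p Y) := by
  have hagree : ∀ r, (∀ i < r, shiftSeq p X i = shiftSeq p Y i) → ∀ i < r + p, X i = Y i :=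
    fun r hr i hi => if hip : i < p then h i hip else by
      simpa [shiftSeq, Nat.sub_add_cancel (not_lt.1 hip)] using hr (i - p) (by omega)
  by_cases hXY : shiftSeq p X = shiftSeq p Y
  · obtain rfl : X = Y := funext fun i =>
      hagree (i + 1) (fun j _ => congrFun hXY j) i (by omega)
    simp [not_seqLT_self]
  · obtain ⟨i, hi⟩ := Function.ne_iff.1 hXY
    obtain ⟨r, -, hr, hne⟩ := exists_firstDiff hi
    rw [seqLT_iff_of_firstDiff (hagree r hr) hne, Nat.add_comm r p, prefixParity_add,
      seqLT_iff_of_firstDiff hr hne, seqLT_iff_of_firstDiff (fun i hi => (hr i hi).symm) hne.symm,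
      prefixParity_congr fun i hi => (hr i hi).symm]
    revert hne
    simp only [shiftSeq, Nat.add_comm r p]
    cases X (p + r) <;> cases Y (p + r) <;> cases prefixParity X p <;> simp

end Order

theorem Function.Periodic.prefixParity_two_mul_sub_one {X : ℕ → Bool} {g : ℕ}
    (h : Periodic X g) (hg : 0 < g) : prefixParity X (2 * g - 1) = X (2 * g - 1) := by
  have hfull : prefixParity X (g + g) = false := by
    rw [prefixParity_add, h.shiftSeq_eq, Bool.xor_self]
  rw [show g + g = 2 * g - 1 + 1 by omega, prefixParity_succ] at hfull
  simpa using hfull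

namespace SeqMaximal

variable {M : ℕ → Bool}

theorem apply_add_eq_prefixParity (hM : SeqMaximal M) {k q : ℕ} (h : ∀ i < q, M (i + k) = M i)
    (hq : M (q + k) ≠ M q) : M (q + k) = prefixParity M q :=
  ((seqLT_iff_of_firstDiff h hq).1 ((hM k).resolve_right fun he => hq (congrFun he q))).trans
    (prefixParity_congr h)

theorem shiftSeq_eq_shiftSeq {X : ℕ → Bool} {n a b : ℕ} (hX : Periodic X n) (hn : 0 < n)
    (ha : SeqMaximal (shiftSeq a X)) (hb : SeqMaximal (shiftSeq b X)) :
    shiftSeq a X = shiftSeq b X := by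
  obtain ⟨c, hc⟩ := hX.exists_shiftSeq_eq hn a b
  obtain ⟨d, hd⟩ := hX.exists_shiftSeq_eq hn b a
  refine parityCode_injective (le_antisymm ?_ ?_)
  · rw [← seqLE_iff_parityCode_le, ← hc]
    exact hb c
  · rw [← seqLE_iff_parityCode_le, ← hd]
    exact ha d

end SeqMaximal

theorem exists_seqMaximal_shiftSeq {A : ℕ → Bool} {n : ℕ} (hA : Periodic A n) (hn : 0 < n) :
    ∃ m < n, SeqMaximal (shiftSeq m A) := by
  obtain ⟨m, hm, hmax⟩ := Finset.exists_max_image (Finset.range n)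
    (fun j => parityCode (shiftSeq j A)) ⟨0, Finset.mem_range.2 hn⟩
  refine ⟨m, Finset.mem_range.1 hm, fun k => ?_⟩
  rw [seqLE_iff_parityCode_le, shiftSeq_shiftSeq, ← hA.shiftSeq_mod]
  exact hmax _ (Finset.mem_range.2 (Nat.mod_lt _ hn))

section Flip

variable {X : ℕ → Bool} {n i : ℕ}

theorem Function.Periodic.flipAt (h : Periodic X n) : Periodic (flipAt n X) n := fun i => by
  simp only [_root_.flipAt, Nat.add_mod_right, h i]

theorem flipAt_flipAt (n : ℕ) (X : ℕ → Bool) : flipAt n (flipAt n X) = X := by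
  funext i
  unfold flipAt
  split_ifs <;> simp

theorem flipAt_apply_of_lt (hi : i < n - 1) : flipAt n X i = X i :=
  if_neg (by rw [Nat.mod_eq_of_lt (by omega)]; omega)

theorem flipAt_apply_sub_one (hn : 0 < n) : flipAt n X (n - 1) = !X (n - 1) :=
  if_pos (Nat.mod_eq_of_lt (by omega))

end Flip

namespace SeqMaximal

variable {M : ℕ → Bool} {n k : ℕ} (hM : SeqMaximal M) (hper : Periodic M n) (hkn : k < n)
  (hprim : shiftSeq k M ≠ M)
include hM hper hkn hprim

theorem prefixParity_sub_eq_true (h : ∀ i < n - 1 - k, M (i + k) = M i) :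
    prefixParity M (n - k) = true := by
  have hnk : n - k = n - 1 - k + 1 := by omega
  by_cases ha : M (n - 1 - k + k) = M (n - 1 - k)
  · have h' : ∀ i < n - k, shiftSeq k M i = M i := fun i hi =>
      if hi' : i < n - 1 - k then h i hi' else by
        obtain rfl : i = n - 1 - k := by omega
        exact ha
    have hlt : SeqLT (shiftSeq k M) M := (hM k).resolve_right hprim
    rw [seqLT_iff_shiftSeq h', prefixParity_congr h', shiftSeq_shiftSeq, Nat.sub_add_cancel hkn.le,
      hper.shiftSeq_eq] at hlt
    cases hp : prefixParity M (n - k)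
    · rw [hp, if_neg Bool.false_ne_true] at hlt
      exact absurd hlt (seqLE_iff_not_seqLT.1 (hM _))
    · rfl
  · have hpar := hM.apply_add_eq_prefixParity h ha
    rw [hnk, prefixParity_succ, ← hpar]
    revert ha
    cases M (n - 1 - k + k) <;> cases M (n - 1 - k) <;> simp

theorem seqLT_shiftSeq_flipAt (h : ¬ ∀ i < n - k, shiftSeq k (flipAt n M) i = flipAt n M i) :
    SeqLT (shiftSeq k (flipAt n M)) (flipAt n M) := by
  have hk : k ≠ 0 := fun hk => hprim (hk ▸ rfl)
  set C := flipAt n M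
  have hCM : ∀ i < n - 1, C i = M i := fun i hi => flipAt_apply_of_lt hi
  by_cases hagree : ∀ i < n - 1 - k, M (i + k) = M i
  · have hpar := hM.prefixParity_sub_eq_true hper hkn hprim hagree
    have hCa : ∀ i < n - 1 - k, shiftSeq k C i = C i := fun i hi => by
      simp only [shiftSeq, hCM (i + k) (by omega), hCM i (by omega), hagree i hi]
    have hne : shiftSeq k C (n - 1 - k) ≠ C (n - 1 - k) := fun heq => h fun i hi =>
      if hi' : i < n - 1 - k then hCa i hi' else by
        obtain rfl : i = n - 1 - k := by omega
        exact heq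
    rw [seqLT_iff_of_firstDiff hCa hne, prefixParity_congr hCa,
      prefixParity_congr fun i hi => hCM i (by omega)]
    rw [show n - k = n - 1 - k + 1 by omega, prefixParity_succ] at hpar
    simp only [shiftSeq, show n - 1 - k + k = n - 1 by omega, C,
      flipAt_apply_sub_one (by omega : 0 < n), flipAt_apply_of_lt (by omega : n - 1 - k < n - 1)]
      at hne ⊢
    revert hne hpar
    cases M (n - 1) <;> cases M (n - 1 - k) <;> cases prefixParity M (n - 1 - k) <;> simp
  · simp only [not_forall] at hagree
    obtain ⟨i, hi, hne⟩ := hagree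
    obtain ⟨q, hqi, hq, hqne⟩ := exists_firstDiff (X := shiftSeq k M) (Y := M) hne
    have hCq : ∀ j < q, shiftSeq k C j = C j := fun j hj => by
      simp only [shiftSeq, hCM (j + k) (by omega), hCM j (by omega)]
      exact hq j hj
    have hCqk : C (q + k) = M (q + k) := hCM _ (by omega)
    have hCne : shiftSeq k C q ≠ C q := by
      simp only [shiftSeq, hCqk, hCM q (by omega)]
      exact hqne
    rw [seqLT_iff_of_firstDiff hCq hCne, prefixParity_congr hCq,
      prefixParity_congr fun j hj => hCM j (by omega)]
    exact hCqk.trans (hM.apply_add_eq_prefixParity hq hqne)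

theorem seqLT_shiftSeq_flipAt_iff (h : ∀ i < n - k, shiftSeq k (flipAt n M) i = flipAt n M i) :
    SeqLT (shiftSeq k (flipAt n M)) (flipAt n M) ↔
      SeqLT (shiftSeq (n - k) (flipAt n M)) (flipAt n M) := by
  have hk : k ≠ 0 := fun hk => hprim (hk ▸ rfl)
  have hCM : ∀ i < n - 1, flipAt n M i = M i := fun i hi => flipAt_apply_of_lt hi
  have hagree : ∀ i < n - 1 - k, M (i + k) = M i := fun i hi => by
    rw [← hCM _ (by omega), ← hCM _ (by omega)]
    exact h i (by omega)
  have hpar : prefixParity (shiftSeq k (flipAt n M)) (n - k) = true := by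
    rw [prefixParity_congr h, prefixParity_congr fun i hi => hCM i (by omega)]
    exact hM.prefixParity_sub_eq_true hper hkn hprim hagree
  rw [seqLT_iff_shiftSeq h, hpar, if_pos rfl, shiftSeq_shiftSeq, Nat.sub_add_cancel hkn.le,
    hper.flipAt.shiftSeq_eq]

end SeqMaximal

theorem seqMaximal_flipAt {M : ℕ → Bool} {n : ℕ} (hM : SeqMaximal M) (hper : Periodic M n)
    (hn : 0 < n) (hprim : ∀ k, 0 < k → k < n → shiftSeq k M ≠ M) : SeqMaximal (flipAt n M) := by
  have hC : Periodic (flipAt n M) n := hper.flipAt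
  have key : ∀ k, 0 < k → k < n → SeqLE (shiftSeq k (flipAt n M)) (flipAt n M) := by
    intro k hk hkn
    by_cases h : ∀ i < n - k, shiftSeq k (flipAt n M) i = flipAt n M i
    · by_cases h' : ∀ i < n - (n - k), shiftSeq (n - k) (flipAt n M) i = flipAt n M i
      · rw [Nat.sub_sub_self hkn.le] at h'
        exact Or.inr (periodic_iff_shiftSeq_eq.1 (hC.of_forall_lt_sub hkn h h'))
      · refine Or.inl ((hM.seqLT_shiftSeq_flipAt_iff hper hkn (hprim k hk hkn) h).2 ?_)
        exact hM.seqLT_shiftSeq_flipAt hper (by omega) (hprim _ (by omega) (by omega)) h'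
    · exact Or.inl (hM.seqLT_shiftSeq_flipAt hper hkn (hprim k hk hkn) h)
  intro k
  rw [← hC.shiftSeq_mod]
  rcases Nat.eq_zero_or_pos (k % n) with h0 | hpos
  · rw [h0]
    exact Or.inr rfl
  · exact key _ hpos (Nat.mod_lt _ hn)

namespace SeqMaximal

variable {M : ℕ → Bool} {n : ℕ}

theorem not_periodic_flipAt (hM : SeqMaximal M) (hper : Periodic M n) {g : ℕ} (hg : 0 < g)
    (hgn : 2 * g < n) : ¬ Periodic (flipAt n M) g := fun hC => by
  set C := flipAt n M
  have hk : Periodic C (n - 2 * g) := hper.flipAt.nat_sub (by simpa using hC.nat_mul 2) hgn.le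
  have hCM : ∀ i < n - 1, C i = M i := fun i hi => flipAt_apply_of_lt hi
  have hlast : M (2 * g - 1 + (n - 2 * g)) = !C (2 * g - 1) := by
    rw [← hk, show 2 * g - 1 + (n - 2 * g) = n - 1 by omega,
      show C (n - 1) = !M (n - 1) from flipAt_apply_sub_one (by omega), Bool.not_not]
  have hagree : ∀ i < 2 * g - 1, M (i + (n - 2 * g)) = M i := fun i hi => by
    rw [← hCM _ (by omega), ← hCM _ (by omega), hk]
  have hne : M (2 * g - 1 + (n - 2 * g)) ≠ M (2 * g - 1) := by
    rw [hlast, ← hCM _ (by omega)]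
    exact Bool.not_ne_self _
  -- maximality makes `M_{n-1}` the parity of `C_0 ⋯ C_{2g-2}`, which is `C_{2g-1}` because
  -- `C_0 ⋯ C_{2g-1}` is a square; but `M_{n-1} = !C_{2g-1}`
  have hpar := hM.apply_add_eq_prefixParity hagree hne
  rw [hlast, prefixParity_congr fun i hi => (hCM i (by omega)).symm,
    hC.prefixParity_two_mul_sub_one hg] at hpar
  exact Bool.not_ne_self _ hpar

theorem two_mul_eq_of_periodic_flipAt (hM : SeqMaximal M) (hper : Periodic M n) {d : ℕ}
    (hC : Periodic (flipAt n M) d) (hd : 0 < d) (hdn : d < n) : 2 * d = n := by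
  by_contra hne
  rcases Nat.lt_or_gt_of_ne hne with h | h
  · exact hM.not_periodic_flipAt hper hd h hC
  · exact hM.not_periodic_flipAt hper (by omega) (by omega) (hper.flipAt.nat_sub hC hdn.le)

theorem shiftSeq_half (hM : SeqMaximal M) (hper : Periodic M n) {a b : ℕ} (hab : a < b)
    (hbn : b < n) (hC : Periodic (flipAt n M) (b - a)) :
    Even n ∧ shiftSeq (n / 2) (shiftSeq (n - a) M) = shiftSeq (n - b) M ∧
      shiftSeq (n / 2) (shiftSeq (n - b) M) = shiftSeq (n - a) M := by
  have hd := hM.two_mul_eq_of_periodic_flipAt hper hC (by omega) (by omega)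
  refine ⟨⟨b - a, by omega⟩, ?_, ?_⟩
  · rw [shiftSeq_shiftSeq, show n / 2 + (n - a) = n - b + n by omega, hper.shiftSeq_add_self]
  · rw [shiftSeq_shiftSeq, show n / 2 + (n - b) = n - a by omega]

end SeqMaximal

section MinimalPeriod

variable {A : ℕ → Bool} {n : ℕ}

theorem periodic_of_minPer_eq (hn : 0 < n) (hA : minPer A = n) : Periodic A n :=
  (hA ▸ Nat.sInf_mem (Nat.nonempty_of_pos_sInf (hA ▸ hn : 0 < minPer A)) : IsPeriodicSeq A n).2

theorem minPer_le {k : ℕ} (hk : 0 < k) (h : Periodic A k) : minPer A ≤ k :=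
  Nat.sInf_le ⟨hk, h⟩

theorem shiftSeq_ne_of_lt_minPer (hn : 0 < n) (hA : minPer A = n) (m : ℕ) {k : ℕ} (hk : 0 < k)
    (hkn : k < n) : shiftSeq k (shiftSeq m A) ≠ shiftSeq m A := fun h => by
  obtain ⟨c, hc⟩ := (periodic_of_minPer_eq hn hA).exists_shiftSeq_eq hn 0 m
  have hAk : Periodic A k := by
    rw [← shiftSeq_zero A, ← hc]
    exact (periodic_iff_shiftSeq_eq.2 h).shiftSeq c
  exact absurd (minPer_le hk hAk) (by omega)

theorem periodic_muSeq (hn : 0 < n) (hA : minPer A = n) : Periodic (muSeq A) n := by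
  rw [muSeq, hA]
  exact ((periodic_of_minPer_eq hn hA).shiftSeq _).flipAt.shiftSeq _

theorem exists_shiftSeq_muSeq (hn : 0 < n) (hA : minPer A = n) :
    ∃ m < n, SeqMaximal (shiftSeq m A) ∧ SeqMaximal (shiftSeq m (muSeq A)) ∧
      shiftSeq m (muSeq A) = flipAt n (shiftSeq m A) := by
  have hper := periodic_of_minPer_eq hn hA
  obtain ⟨j, hj, hjmax⟩ := exists_seqMaximal_shiftSeq hper hn
  set m := sInf {m | SeqMaximal (shiftSeq m A)}
  have hm : m < n := (Nat.sInf_le hjmax).trans_lt hj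
  have hμ : shiftSeq m (muSeq A) = flipAt n (shiftSeq m A) := by
    rw [muSeq, hA, shiftSeq_shiftSeq, Nat.add_sub_cancel' hm.le,
      (hper.shiftSeq _).flipAt.shiftSeq_eq]
  have hmax : SeqMaximal (shiftSeq m A) :=
    Nat.sInf_mem (s := {m | SeqMaximal (shiftSeq m A)}) ⟨j, hjmax⟩
  refine ⟨m, hm, hmax, ?_, hμ⟩
  rw [hμ]
  exact seqMaximal_flipAt hmax (hper.shiftSeq m) hn fun k => shiftSeq_ne_of_lt_minPer hn hA m

end MinimalPeriod

/-- If `A` and `B` are periodic admissible sequences of minimal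
period `n` and `μ A = μ B`, then either `A = B`, or `n` is even and
`S^{n/2} A = B`. -/
theorem stmt5 (A B : ℕ → Bool) (n : ℕ) (hn : 0 < n)
    (hA : minPer A = n) (hB : minPer B = n) (hmu : muSeq A = muSeq B) :
    A = B ∨ (Even n ∧ shiftSeq (n / 2) A = B) := by
  obtain ⟨a, ha, hMmax, hCa, hμa⟩ := exists_shiftSeq_muSeq hn hA
  obtain ⟨b, hb, -, hCb, hμb⟩ := exists_shiftSeq_muSeq hn hB
  rw [hmu] at hCa hμa
  have hab := SeqMaximal.shiftSeq_eq_shiftSeq (periodic_muSeq hn hB) hn hCa hCb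
  have hM : shiftSeq a A = shiftSeq b B := by
    rw [← flipAt_flipAt n (shiftSeq a A), ← hμa, hab, hμb, flipAt_flipAt]
  have hMper := (periodic_of_minPer_eq hn hA).shiftSeq a
  have hAM : A = shiftSeq (n - a) (shiftSeq a A) := by
    rw [shiftSeq_shiftSeq, Nat.sub_add_cancel ha.le, (periodic_of_minPer_eq hn hA).shiftSeq_eq]
  have hBM : B = shiftSeq (n - b) (shiftSeq a A) := by
    rw [hM, shiftSeq_shiftSeq, Nat.sub_add_cancel hb.le, (periodic_of_minPer_eq hn hB).shiftSeq_eq]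
  rcases lt_trichotomy a b with hlt | rfl | hlt
  · obtain ⟨he, h, -⟩ := hMmax.shiftSeq_half hMper hlt hb
      (by rw [← hμa]; exact periodic_shiftSeq_sub hab hlt.le)
    exact Or.inr ⟨he, by rw [hAM, hBM, h]⟩
  · exact Or.inl (hAM.trans hBM.symm)
  · obtain ⟨he, -, h⟩ := hMmax.shiftSeq_half hMper hlt ha
      (by rw [← hμa, hab]; exact periodic_shiftSeq_sub hab.symm hlt.le)
    exact Or.inr ⟨he, by rw [hAM, hBM, h]⟩
end

section
/- Let A be an admissible sequence with S^n(A) = A (not necessarily of minimal period n), and suppose A is maximal. Let Ã be the period-n sequence obtained from A by flipping the symbol at every position congruent to n−1 modulo n. Then either the minimal period of A is n or the minimal period of Ã is n. -/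
open Function

namespace Function.Periodic

theorem nat_mod {α : Type*} {A : ℕ → α} {d n : ℕ} (hd : Periodic A d) (hn : Periodic A n) :
    Periodic A (n % d) := fun i => by
  calc A (i + n % d) = A (i + n % d + (n / d) * d) := ((hd.nat_mul _) _).symm
    _ = A (i + n) := by rw [add_assoc, mul_comm, Nat.mod_add_div]
    _ = A i := hn i

end Function.Periodic

theorem isPeriodicSeq_minPer {A : ℕ → Bool} {n : ℕ} (h : IsPeriodicSeq A n) :
    IsPeriodicSeq A (minPer A) :=
  Nat.sInf_mem (s := {k | IsPeriodicSeq A k}) ⟨n, h⟩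

theorem minPer_dvd {A : ℕ → Bool} {n : ℕ} (h : IsPeriodicSeq A n) : minPer A ∣ n := by
  obtain ⟨hd0, hd⟩ := isPeriodicSeq_minPer h
  refine Nat.dvd_of_mod_eq_zero (Nat.eq_zero_of_not_pos fun hpos => ?_)
  have : minPer A ≤ n % minPer A := Nat.sInf_le ⟨hpos, Periodic.nat_mod hd h.2⟩
  exact (Nat.mod_lt n hd0).not_ge this

theorem dvd_of_mod_add_eq {n i k : ℕ} (h : (i + k) % n = i % n) : n ∣ k :=
  (Nat.modEq_zero_iff_dvd).mp (Nat.ModEq.add_left_cancel' i (show i + k ≡ i + 0 [MOD n] from h))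

section flipAt

variable {A : ℕ → Bool} {n i : ℕ}

theorem flipAt_of_mod_ne (h : i % n ≠ n - 1) : flipAt n A i = A i := if_neg h

theorem flipAt_of_mod_eq (h : i % n = n - 1) : flipAt n A i = !A i := if_pos h

theorem periodic_flipAt (h : Periodic A n) : Periodic (flipAt n A) n := fun i => by
  simp only [flipAt, Nat.add_mod_right, h i]

theorem periodic_of_periodic_flipAt {d m : ℕ} (hd : Periodic A d) (hm : Periodic (flipAt n A) m)
    (hd0 : 0 < d) (hdn : d ∣ n) (hdlt : d < n) (hmn : m ∣ n) (hmlt : m < n) :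
    Periodic A m := by
  rcases eq_or_ne d m with rfl | hne
  · exact hd
  have hnd : ¬ n ∣ d := fun h => (Nat.le_of_dvd hd0 h).not_gt hdlt
  have hndm : ¬ n ∣ d + m := fun h => hne <| Nat.dvd_antisymm
    ((Nat.dvd_add_right dvd_rfl).mp (hdn.trans h)) ((Nat.dvd_add_left dvd_rfl).mp (hmn.trans h))
  have hgood : ∀ j, j % n ≠ n - 1 → (j + m) % n ≠ n - 1 → A (j + m) = A j :=
    fun j hj hjm => by simpa only [flipAt_of_mod_ne hj, flipAt_of_mod_ne hjm] using hm j
  intro i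
  by_cases hi : i % n ≠ n - 1 ∧ (i + m) % n ≠ n - 1
  · exact hgood i hi.1 hi.2
  have hbad : i % n = n - 1 ∨ (i + m) % n = n - 1 := by tauto
  have hid : (i + d) % n ≠ n - 1 := fun h => by
    rcases hbad with hi | hi
    · exact hnd (dvd_of_mod_add_eq (h.trans hi.symm))
    · have : d ≡ m [MOD n] := Nat.ModEq.add_left_cancel' i (h.trans hi.symm)
      exact hne (Nat.ModEq.eq_of_lt_of_lt this hdlt hmlt)
  have hidm : (i + d + m) % n ≠ n - 1 := fun h => by
    rcases hbad with hi | hi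
    · rw [add_assoc] at h
      exact hndm (dvd_of_mod_add_eq (h.trans hi.symm))
    · rw [add_right_comm] at h
      exact hnd (dvd_of_mod_add_eq (h.trans hi.symm))
  calc A (i + m) = A (i + d + m) := by rw [add_right_comm, hd]
    _ = A (i + d) := hgood _ hid hidm
    _ = A i := hd i

theorem dvd_of_periodic_flipAt {m : ℕ} (hn : 0 < n) (hA : Periodic A m)
    (hB : Periodic (flipAt n A) m) : n ∣ m := by
  by_contra hnm
  have hlast : (n - 1) % n = n - 1 := Nat.mod_eq_of_lt (Nat.sub_lt hn one_pos)
  have hshift : (n - 1 + m) % n ≠ n - 1 := fun h => hnm (dvd_of_mod_add_eq (h.trans hlast.symm))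
  have := hB (n - 1)
  rw [flipAt_of_mod_ne hshift, flipAt_of_mod_eq hlast, hA] at this
  exact Bool.eq_not_self _ |>.mp this

end flipAt

theorem stmt7_general (A : ℕ → Bool) (n : ℕ) (hn : 0 < n) (hper : ∀ i, A (i + n) = A i) :
    minPer A = n ∨ minPer (flipAt n A) = n := by
  have hA : IsPeriodicSeq A n := ⟨hn, hper⟩
  have hB : IsPeriodicSeq (flipAt n A) n := ⟨hn, periodic_flipAt hper⟩
  obtain ⟨hd0, hd⟩ := isPeriodicSeq_minPer hA
  obtain ⟨hm0, hm⟩ := isPeriodicSeq_minPer hB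
  by_contra! hne
  have hdlt := lt_of_le_of_ne (Nat.le_of_dvd hn (minPer_dvd hA)) hne.1
  have hmlt := lt_of_le_of_ne (Nat.le_of_dvd hn (minPer_dvd hB)) hne.2
  have hAm : Periodic A (minPer (flipAt n A)) :=
    periodic_of_periodic_flipAt hd hm hd0 (minPer_dvd hA) hdlt (minPer_dvd hB) hmlt
  exact hmlt.not_ge (Nat.le_of_dvd hm0 (dvd_of_periodic_flipAt hn hAm hm))

/-- Let `A` be a maximal admissible sequence with `S^n A = A` (not
necessarily of minimal period `n`), and let `Ã` be obtained from `A` by flipping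
the symbol at every position congruent to `n - 1` modulo `n`.  Then either the
minimal period of `A` is `n` or the minimal period of `Ã` is `n`. -/
theorem stmt7 (A : ℕ → Bool) (n : ℕ) (hn : 0 < n) (hper : ∀ i, A (i + n) = A i)
    (hmax : SeqMaximal A) :
    minPer A = n ∨ minPer (flipAt n A) = n :=
  stmt7_general A n hn hper
end
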